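/- Let G=(V,E) be a finite graph, partition V=V_1∪V_2, let E_i be the edges within V_i, B the edges between V_1 and V_2, B^0⊆B, and W_i the endvertices in V_i of edges in B∖B^0. Fix σ∈S_{1/q}^{W_1∪W_2} with σ(x)=σ(y) for every ⟨x,y⟩∈B∖B^0, where S_{1/q}={i : a_i=1/q}. Then, conditionally on the event C(B,σ) that all edges in B^0 are closed and the spins on W_1∪W_2 equal σ, under the DaC measure P^G the pair (spin, edge) configurations on (V_1,E_1) and on (V_2,E_2) are independent; moreover the conditional probability of (ξ,η) factorizes as P^{G_1}((ξ_{V_1},η_{E_1})|K_1) · P^{G_2}((ξ_{V_2},η_{E_2})|K_2) · 1{η≡0 on B^0} · ∏_{e∈B∖B^0} p^{η(e)}(1-p)^{1-η(e)}, where K_i is the event that the spins on W_i equal σ_{W_i}. -/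

import Mathlib

open Finset

/-- The relation on vertices generated by the open edges of a bond configuration `η`. -/
def openRel {V E : Type} (ends : E → V × V) (η : E → Bool) (x y : V) : Prop :=
  ∃ e, η e = true ∧ (ends e).1 = x ∧ (ends e).2 = y

/-- The number of connected components of the graph `(V, {e : η e = 1})`. -/
noncomputable def numComp {V E : Type} (ends : E → V × V) (η : E → Bool) : ℕ :=
  Nat.card (Quot (openRel ends η))

/-- The unnormalized random-cluster weight `q^{k(η)} ∏_e p^{η(e)}(1-p)^{1-η(e)}`. -/
noncomputable def rcWeight {V E : Type} [Fintype E] (ends : E → V × V) (p q : ℝ)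
    (η : E → Bool) : ℝ :=
  q ^ numComp ends η * ∏ e : E, (if η e then p else 1 - p)

/-- The random-cluster normalizing constant `Z^G_{p,q}`. -/
noncomputable def rcZ {V E : Type} [Fintype E] [DecidableEq E] (ends : E → V × V)
    (p q : ℝ) : ℝ :=
  ∑ η : E → Bool, rcWeight ends p q η

/-- The random-cluster measure `Φ^G_{p,q}` on `{0,1}^E`. -/
noncomputable def rcMeasure {V E : Type} [Fintype E] [DecidableEq E] (ends : E → V × V)
    (p q : ℝ) (η : E → Bool) : ℝ :=
  rcWeight ends p q η / rcZ ends p q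

/-- A spin configuration `σ` is constant on each connected component of `η`. -/
def compatible {V E : Type} (ends : E → V × V) (η : E → Bool) {s : ℕ}
    (σ : V → Fin s) : Prop :=
  ∀ x y, Relation.EqvGen (openRel ends η) x y → σ x = σ y

/-- The number `k^{σ,i}(η)` of connected components of `η` containing a vertex of spin `i`. -/
noncomputable def spinCompCount {V E : Type} (ends : E → V × V) (η : E → Bool) {s : ℕ}
    (σ : V → Fin s) (i : Fin s) : ℕ :=
  Nat.card {c : Quot (openRel ends η) // ∃ x, Quot.mk (openRel ends η) x = c ∧ σ x = i}

open Classical in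
/-- The divide-and-color measure `P^G` on `S^V × {0,1}^E`. -/
noncomputable def dacP {V E : Type} [Fintype E] [DecidableEq E] (ends : E → V × V)
    (p q : ℝ) {s : ℕ} (a : Fin s → ℝ) (σ : V → Fin s) (η : E → Bool) : ℝ :=
  if compatible ends η σ then
    rcMeasure ends p q η * ∏ i : Fin s, (a i) ^ spinCompCount ends η σ i
  else 0

/-- The endpoint map of the subgraph induced by the vertices satisfying `P`. -/
def restrEnds {V E : Type} (ends : E → V × V) (P : V → Prop) :
    {e : E // P (ends e).1 ∧ P (ends e).2} → {v : V // P v} × {v : V // P v} :=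
  fun e => (⟨(ends e.1).1, e.2.1⟩, ⟨(ends e.1).2, e.2.2⟩)

/-- `e` is a crossing edge between `V1` and its complement. -/
def crossing {V E : Type} (ends : E → V × V) (V1 : Finset V) (e : E) : Prop :=
  ¬(((ends e).1 ∈ V1) ↔ ((ends e).2 ∈ V1))

/-- `W_1 ∪ W_2`: the endvertices of the crossing edges in `B ∖ B0`. -/
def bridgeVerts {V E : Type} (ends : E → V × V) (V1 : Finset V) (B0 : Finset E) :
    Set V :=
  {x | ∃ e, crossing ends V1 e ∧ e ∉ B0 ∧ ((ends e).1 = x ∨ (ends e).2 = x)}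

open Classical in
/-- The probability of the event `C(B,σ)`: all edges of `B0` closed and spins on
`W_1 ∪ W_2` equal to `σ`. -/
noncomputable def probC {V E : Type} [Fintype V] [DecidableEq V] [Fintype E] [DecidableEq E]
    (ends : E → V × V) (p q : ℝ) {s : ℕ} (a : Fin s → ℝ) (V1 : Finset V)
    (B0 : Finset E) (σ : V → Fin s) : ℝ :=
  ∑ ξ : V → Fin s, ∑ η : E → Bool,
    if (∀ e ∈ B0, η e = false) ∧ (∀ x ∈ bridgeVerts ends V1 B0, ξ x = σ x) then
      dacP ends p q a ξ η
    else 0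

open Classical in
/-- The probability under the DaC measure of the subgraph `G_P` of the event `K`:
spins on the bridge vertices inside `G_P` equal to `σ`. -/
noncomputable def probK {V E : Type} [Fintype V] [DecidableEq V] [Fintype E] [DecidableEq E]
    (ends : E → V × V) (p q : ℝ) {s : ℕ} (a : Fin s → ℝ) (P : V → Prop)
    (Wv : Set V) (σ : V → Fin s) : ℝ :=
  ∑ ξ : {v : V // P v} → Fin s, ∑ η : {e : E // P (ends e).1 ∧ P (ends e).2} → Bool,
    if ∀ x : {v : V // P v}, (x : V) ∈ Wv → ξ x = σ (x : V) then
      dacP (restrEnds ends P) p q a ξ η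
    else 0

/-!
Under `C(B,σ)` every open crossing bond has both endpoints in `W₁ ∪ W₂`, where the spin `i`
satisfies `q a_i = 1`. Write the DaC weight of a compatible configuration as
`∏_e p^{η(e)}(1-p)^{1-η(e)} · ∏_{clusters} q a_{spin}`: the clusters meeting `W₁ ∪ W₂`
contribute `1`, and every other cluster lies inside `V₁` or inside `V₂`. Hence on `C(B,σ)` the
weight of `(ξ,η)` is `(1-p)^{|B⁰|}` times the weights of `(ξ_{V₁},η_{E₁})` on `K₁` and of
`(ξ_{V₂},η_{E₂})` on `K₂` times a product of bond weights on `B` that sum to `1`. Summing over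
all configurations gives `P^G(C(B,σ))` as the same product of the unnormalised
`P^{G_i}(K_i)`, and dividing gives the factorization.
-/

open Classical Function

theorem Fintype.prod_comp_eq_prod_of_surjective {α β M : Type} [Fintype α] [Fintype β]
    [CommMonoid M] {f : α → β} (hf : Surjective f) (g : β → M)
    (hinj : ∀ x y, f x = f y → g (f x) ≠ 1 → x = y) : ∏ x, g (f x) = ∏ b, g b :=
  Finset.prod_bij_ne_one (fun x _ _ => f x) (fun _ _ _ => Finset.mem_univ _)
    (fun x _ hx y _ _ hxy => hinj x y hxy hx)
    (fun b _ _ => let ⟨x, hx⟩ := hf b; ⟨x, Finset.mem_univ _, by rwa [hx], hx⟩)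
    fun _ _ _ => rfl

theorem Fintype.prod_eq_mul_mul_of_bijective_sumElim {ι κ μ α M : Type} [Fintype ι]
    [Fintype κ] [Fintype μ] [Fintype α] [CommMonoid M] {i : ι → α} {j : κ → α} {k : μ → α}
    (h : Bijective (Sum.elim i (Sum.elim j k))) (f : α → M) :
    ∏ x, f x = (∏ x, f (i x)) * (∏ y, f (j y)) * ∏ z, f (k z) := by
  rw [← Fintype.prod_bijective _ h (f ∘ Sum.elim i (Sum.elim j k)) f fun _ => rfl,
    Fintype.prod_sum_type, Fintype.prod_sum_type, mul_assoc]
  rfl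

theorem Fintype.sum_mul_sum_of_bijective_sumElim {ι κ α β R : Type} [Fintype ι] [DecidableEq ι]
    [Fintype κ] [DecidableEq κ] [Fintype α] [DecidableEq α] [Fintype β] [CommSemiring R]
    {i : ι → α} {j : κ → α} (h : Bijective (Sum.elim i j)) (g : (ι → β) → R)
    (k : (κ → β) → R) : ∑ f : α → β, g (f ∘ i) * k (f ∘ j) = (∑ u, g u) * ∑ v, k v := by
  rw [Finset.sum_mul_sum, ← Fintype.sum_prod_type']
  exact Fintype.sum_equiv ((Equiv.arrowCongr (Equiv.ofBijective _ h) (Equiv.refl β)).symm.trans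
    (Equiv.sumArrowEquivProdArrow ι κ β)) _ _ fun _ => rfl

theorem Fintype.sum_mul_mul_of_bijective_sumElim {ι κ μ α β R : Type} [Fintype ι]
    [DecidableEq ι] [Fintype κ] [DecidableEq κ] [Fintype μ] [DecidableEq μ] [Fintype α]
    [DecidableEq α] [Fintype β] [CommSemiring R] {i : ι → α} {j : κ → α} {k : μ → α}
    (h : Bijective (Sum.elim i (Sum.elim j k))) (g : (ι → β) → R) (g' : (κ → β) → R)
    (g'' : (μ → β) → R) :
    ∑ f : α → β, g (f ∘ i) * g' (f ∘ j) * g'' (f ∘ k)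
      = (∑ u, g u) * (∑ v, g' v) * ∑ w, g'' w := by
  have hinl : Bijective (Sum.elim Sum.inl Sum.inr : κ ⊕ μ → κ ⊕ μ) := by
    rw [Sum.elim_inl_inr]
    exact bijective_id
  simp_rw [mul_assoc]
  rw [← Fintype.sum_mul_sum_of_bijective_sumElim hinl]
  exact Fintype.sum_mul_sum_of_bijective_sumElim h g fun u => g' (u ∘ .inl) * g'' (u ∘ .inr)

section Clusters

variable {V E : Type} (ends : E → V × V) (η : E → Bool) {s : ℕ} {ξ : V → Fin s}

def compSpin (hc : compatible ends η ξ) : Quot (openRel ends η) → Fin s :=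
  Quot.lift ξ fun x y h => hc x y (.rel x y h)

theorem spinCompCount_eq_card (hc : compatible ends η ξ) [Fintype (Quot (openRel ends η))]
    (i : Fin s) : spinCompCount ends η ξ i = Fintype.card {c // compSpin ends η hc c = i} := by
  rw [spinCompCount, ← Nat.card_eq_fintype_card]
  refine Nat.card_congr (Equiv.subtypeEquivRight fun c => ?_)
  induction c using Quot.ind with
  | mk y =>
    constructor
    · rintro ⟨x, hx, rfl⟩
      exact (hc _ _ (Quot.eq.1 hx)).symm
    · exact fun h => ⟨y, rfl, h⟩

theorem pow_numComp_mul_prod_pow_spinCompCount {M : Type} [CommMonoid M] (q : M)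
    (a : Fin s → M) (hc : compatible ends η ξ) [Fintype (Quot (openRel ends η))] :
    q ^ numComp ends η * ∏ i, a i ^ spinCompCount ends η ξ i
      = ∏ c, q * a (compSpin ends η hc c) := by
  rw [Finset.prod_mul_distrib, Finset.prod_const, Finset.card_univ, numComp,
    Nat.card_eq_fintype_card, ← Finset.prod_fiberwise' _ (compSpin ends η hc)]
  congr 1
  refine Finset.prod_congr rfl fun i _ => ?_
  rw [Finset.prod_const, spinCompCount_eq_card ends η hc, Fintype.card_subtype]

variable (P : V → Prop)

def restrictComp : Quot (openRel (restrEnds ends P) fun e => η e.1) → Quot (openRel ends η) :=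
  Quot.map Subtype.val fun _ _ ⟨e, he, h1, h2⟩ =>
    ⟨e.1, he, congrArg Subtype.val h1, congrArg Subtype.val h2⟩

theorem compatible.restrict (hc : compatible ends η ξ) :
    compatible (restrEnds ends P) (fun e => η e.1) (fun x => ξ x.1) := fun x y hxy =>
  hc x.1 y.1 (Quot.eq.1 (congrArg (restrictComp ends η P) (Quot.eq.2 hxy)))

theorem compSpin_restrict (hc : compatible ends η ξ) (c) :
    compSpin (restrEnds ends P) (fun e => η e.1) (hc.restrict ends η P) c
      = compSpin ends η hc (restrictComp ends η P c) := by
  induction c using Quot.ind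
  rfl

theorem eqvGen_restrict_of_avoids {W : Set V}
    (hW : ∀ e, η e = true → ¬(P (ends e).1 ↔ P (ends e).2) → (ends e).1 ∈ W) {x y : V}
    (hxy : Relation.EqvGen (openRel ends η) x y)
    (hx : ∀ z, Relation.EqvGen (openRel ends η) x z → z ∉ W) :
    (P x ↔ P y) ∧ ∀ (hPx : P x) (hPy : P y),
      Relation.EqvGen (openRel (restrEnds ends P) fun e => η e.1) ⟨x, hPx⟩ ⟨y, hPy⟩ := by
  induction hxy with
  | rel x y h =>
    obtain ⟨e, he, rfl, rfl⟩ := h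
    have hside : P (ends e).1 ↔ P (ends e).2 :=
      not_not.1 fun hcr => hx _ (.refl _) (hW e he hcr)
    exact ⟨hside, fun h1 h2 => .rel _ _ ⟨⟨e, h1, h2⟩, he, rfl, rfl⟩⟩
  | refl x => exact ⟨Iff.rfl, fun _ _ => .refl _⟩
  | symm x y hxy ih =>
    obtain ⟨hiff, hpath⟩ := ih fun z hz => hx z (.trans _ _ _ (.symm _ _ hxy) hz)
    exact ⟨hiff.symm, fun hPy hPx => .symm _ _ (hpath hPx hPy)⟩
  | trans x y z hxy _ ih1 ih2 =>
    obtain ⟨hiff1, hpath1⟩ := ih1 hx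
    obtain ⟨hiff2, hpath2⟩ := ih2 fun w hw => hx w (.trans _ _ _ hxy hw)
    exact ⟨hiff1.trans hiff2, fun hPx hPz =>
      .trans _ _ _ (hpath1 hPx (hiff1.1 hPx)) (hpath2 (hiff1.1 hPx) hPz)⟩

theorem compatible_of_restrict
    (h1 : compatible (restrEnds ends P) (fun e => η e.1) (fun x => ξ x.1))
    (h2 : compatible (restrEnds ends (¬P ·)) (fun e => η e.1) (fun x => ξ x.1))
    (hcross : ∀ e, η e = true → ¬(P (ends e).1 ↔ P (ends e).2) → ξ (ends e).1 = ξ (ends e).2) :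
    compatible ends η ξ := by
  intro x y hxy
  induction hxy with
  | rel x y h =>
    obtain ⟨e, he, rfl, rfl⟩ := h
    by_cases hside : P (ends e).1 ↔ P (ends e).2
    · by_cases hP : P (ends e).1
      · exact h1 ⟨_, hP⟩ ⟨_, hside.1 hP⟩ (.rel _ _ ⟨⟨e, hP, hside.1 hP⟩, he, rfl, rfl⟩)
      · exact h2 ⟨_, hP⟩ ⟨_, mt hside.2 hP⟩ (.rel _ _ ⟨⟨e, hP, mt hside.2 hP⟩, he, rfl, rfl⟩)
    · exact hcross e he hside
  | refl => rfl
  | symm _ _ _ ih => exact ih.symm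
  | trans _ _ _ _ _ ih1 ih2 => exact ih1.trans ih2

def sideIncl :
    Quot (openRel (restrEnds ends P) fun e => η e.1) ⊕
      Quot (openRel (restrEnds ends (¬P ·)) fun e => η e.1) → Quot (openRel ends η) :=
  Sum.elim (restrictComp ends η P) (restrictComp ends η (¬P ·))

theorem sideIncl_surjective : Surjective (sideIncl ends η P) := by
  intro c
  induction c using Quot.ind with
  | mk y =>
    by_cases hy : P y
    · exact ⟨.inl (Quot.mk _ ⟨y, hy⟩), rfl⟩
    · exact ⟨.inr (Quot.mk _ ⟨y, hy⟩), rfl⟩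

theorem sideIncl_injective_of_avoids {W : Set V}
    (hW : ∀ e, η e = true → ¬(P (ends e).1 ↔ P (ends e).2) → (ends e).1 ∈ W)
    {c c' : Quot (openRel (restrEnds ends P) fun e => η e.1) ⊕
      Quot (openRel (restrEnds ends (¬P ·)) fun e => η e.1)}
    (h : sideIncl ends η P c = sideIncl ends η P c')
    (hc : ∀ z ∈ W, Quot.mk _ z ≠ sideIncl ends η P c) : c = c' := by
  have hW' : ∀ e, η e = true → ¬(¬P (ends e).1 ↔ ¬P (ends e).2) → (ends e).1 ∈ W :=
    fun e he hcr => hW e he (not_iff_not.not.1 hcr)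
  rcases c with c | c <;> rcases c' with c' | c'
    <;> obtain ⟨x, rfl⟩ := Quot.exists_rep c <;> obtain ⟨y, rfl⟩ := Quot.exists_rep c'
    <;> have hxy : Relation.EqvGen (openRel ends η) x.1 y.1 := Quot.eq.1 h
    <;> have hx : ∀ z, Relation.EqvGen (openRel ends η) x.1 z → z ∉ W :=
          fun z hz hzW => hc z hzW (Quot.eq.2 hz).symm
  · exact congrArg Sum.inl (Quot.eq.2 ((eqvGen_restrict_of_avoids ends η P hW hxy hx).2 x.2 y.2))
  · exact absurd ((eqvGen_restrict_of_avoids ends η P hW hxy hx).1.1 x.2) y.2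
  · exact absurd ((eqvGen_restrict_of_avoids ends η P hW hxy hx).1.2 y.2) x.2
  · exact congrArg Sum.inr
      (Quot.eq.2 ((eqvGen_restrict_of_avoids ends η (¬P ·) hW' hxy hx).2 x.2 y.2))

/-- Clusters containing a vertex `z` with `w (ξ z) = 1` contribute `1`; every other cluster
contains no open crossing bond, so it is a cluster of exactly one side. -/
theorem prod_compSpin_eq_mul {M : Type} [CommMonoid M] (w : Fin s → M)
    (hc : compatible ends η ξ)
    (hw : ∀ e, η e = true → ¬(P (ends e).1 ↔ P (ends e).2) → w (ξ (ends e).1) = 1)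
    [Fintype (Quot (openRel ends η))]
    [Fintype (Quot (openRel (restrEnds ends P) fun e => η e.1))]
    [Fintype (Quot (openRel (restrEnds ends (¬P ·)) fun e => η e.1))] :
    ∏ c, w (compSpin ends η hc c)
      = (∏ c, w (compSpin _ _ (hc.restrict ends η P) c))
        * ∏ c, w (compSpin _ _ (hc.restrict ends η (¬P ·)) c) := by
  simp only [compSpin_restrict ends η P hc, compSpin_restrict ends η (¬P ·) hc]
  rw [← Fintype.prod_comp_eq_prod_of_surjective (sideIncl_surjective ends η P) _
    fun c c' h hne => sideIncl_injective_of_avoids ends η P (W := {z | w (ξ z) = 1}) hw h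
      fun z hz hzc => hne (by rw [← hzc]; exact hz), Fintype.prod_sum_type]
  rfl

end Clusters

theorem bijective_edgeSplit {V E : Type} [DecidableEq V] (ends : E → V × V) (V1 : Finset V) :
    Bijective (Sum.elim (Subtype.val : {e // (ends e).1 ∈ V1 ∧ (ends e).2 ∈ V1} → E)
      (Sum.elim (Subtype.val : {e // (ends e).1 ∉ V1 ∧ (ends e).2 ∉ V1} → E)
        (Subtype.val : {e // crossing ends V1 e} → E))) := by
  refine ⟨Subtype.val_injective.sumElim (Subtype.val_injective.sumElim Subtype.val_injective ?_) ?_,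
    fun e => ?_⟩
  · rintro ⟨e, he⟩ ⟨_, hcr⟩ rfl
    exact hcr (iff_of_false he.1 he.2)
  · rintro ⟨e, he⟩ (⟨_, he'⟩ | ⟨_, hcr⟩) rfl
    · exact he'.1 he.1
    · exact hcr (iff_of_true he.1 he.2)
  · by_cases hcr : crossing ends V1 e
    · exact ⟨.inr (.inr ⟨e, hcr⟩), rfl⟩
    by_cases h1 : (ends e).1 ∈ V1
    · exact ⟨.inl ⟨e, h1, (not_not.1 hcr).1 h1⟩, rfl⟩
    · exact ⟨.inr (.inl ⟨e, h1, mt (not_not.1 hcr).2 h1⟩), rfl⟩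

section Weights

variable {V E : Type} [Fintype E] (ends : E → V × V) (p q : ℝ) {s : ℕ} (a : Fin s → ℝ)

noncomputable def dacWeight (ξ : V → Fin s) (η : E → Bool) : ℝ :=
  if compatible ends η ξ then rcWeight ends p q η * ∏ i, a i ^ spinCompCount ends η ξ i else 0

theorem ite_dacP_eq_div [DecidableEq E] (c : Prop) [Decidable c] (ξ : V → Fin s)
    (η : E → Bool) :
    (if c then dacP ends p q a ξ η else 0)
      = (if c then dacWeight ends p q a ξ η else 0) / rcZ ends p q := by
  rw [ite_div, zero_div, dacP, dacWeight, rcMeasure, div_mul_eq_mul_div, ite_div, zero_div]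

theorem dacWeight_of_compatible {ξ : V → Fin s} {η : E → Bool} (hc : compatible ends η ξ)
    [Fintype (Quot (openRel ends η))] :
    dacWeight ends p q a ξ η
      = (∏ e, if η e then p else 1 - p) * ∏ c, q * a (compSpin ends η hc c) := by
  rw [dacWeight, if_pos hc, rcWeight, ← pow_numComp_mul_prod_pow_spinCompCount]
  ring

variable [DecidableEq V] (V1 : Finset V)

theorem dacWeight_eq_mul_of_crossing [Fintype V] {ξ : V → Fin s} {η : E → Bool}
    (hcross : ∀ e, η e = true → crossing ends V1 e →
      ξ (ends e).1 = ξ (ends e).2 ∧ q * a (ξ (ends e).1) = 1) :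
    dacWeight ends p q a ξ η
      = dacWeight (restrEnds ends (· ∈ V1)) p q a (fun x => ξ x.1) (fun e => η e.1)
        * dacWeight (restrEnds ends (· ∉ V1)) p q a (fun x => ξ x.1) (fun e => η e.1)
        * ∏ e : {e // crossing ends V1 e}, if η e.1 then p else 1 - p := by
  by_cases hc : compatible ends η ξ
  · have := Fintype.ofFinite (Quot (openRel ends η))
    have := Fintype.ofFinite (Quot (openRel (restrEnds ends (· ∈ V1)) fun e => η e.1))
    have := Fintype.ofFinite (Quot (openRel (restrEnds ends (· ∉ V1)) fun e => η e.1))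
    rw [dacWeight_of_compatible _ _ _ _ hc,
      dacWeight_of_compatible _ _ _ _ (hc.restrict ends η (· ∈ V1)),
      dacWeight_of_compatible _ _ _ _ (hc.restrict ends η (· ∉ V1)),
      prod_compSpin_eq_mul ends η (· ∈ V1) (fun i => q * a i) hc fun e he hcr =>
        (hcross e he hcr).2,
      Fintype.prod_eq_mul_mul_of_bijective_sumElim (bijective_edgeSplit ends V1)]
    ring
  · have hside : ¬(compatible (restrEnds ends (· ∈ V1)) (fun e => η e.1) (fun x => ξ x.1) ∧
        compatible (restrEnds ends (· ∉ V1)) (fun e => η e.1) (fun x => ξ x.1)) :=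
      fun ⟨h1, h2⟩ => hc (compatible_of_restrict ends η (· ∈ V1) h1 h2 fun e he hcr =>
        (hcross e he hcr).1)
    rw [dacWeight, if_neg hc]
    rcases not_and_or.1 hside with h | h <;> simp [dacWeight, h]

end Weights

section Barrier

variable {E : Type} [DecidableEq E] (p : ℝ) (B0 : Finset E)

def barrierBondWeight (e : E) (b : Bool) : ℝ :=
  if e ∈ B0 then (if b then 0 else 1) else (if b then p else 1 - p)

theorem sum_prod_barrierBondWeight {ι : Type} [Fintype ι] [DecidableEq ι] (v : ι → E) :
    ∑ η : ι → Bool, ∏ x, barrierBondWeight p B0 (v x) (η x) = 1 := by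
  rw [← Fintype.prod_sum fun x b => barrierBondWeight p B0 (v x) b]
  refine Finset.prod_eq_one fun x _ => ?_
  by_cases h : v x ∈ B0 <;> simp [barrierBondWeight, h]

variable {V : Type} [Fintype E] (ends : E → V × V) (V1 : Finset V) {η : E → Bool}

theorem prod_crossing_eq_pow_mul (hB0 : ∀ e ∈ B0, crossing ends V1 e)
    (hη : ∀ e ∈ B0, η e = false) :
    ∏ e : {e // crossing ends V1 e}, (if η e.1 then p else 1 - p)
      = (1 - p) ^ B0.card
        * ∏ e : {e // crossing ends V1 e}, barrierBondWeight p B0 e.1 (η e.1) := by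
  have hsplit : ∀ e : {e // crossing ends V1 e}, (if η e.1 then p else 1 - p)
      = (if e.1 ∈ B0 then 1 - p else 1) * barrierBondWeight p B0 e.1 (η e.1) := by
    intro e
    by_cases he : e.1 ∈ B0
    · simp [barrierBondWeight, he, hη _ he]
    · simp [barrierBondWeight, he]
  rw [Finset.prod_congr rfl fun e _ => hsplit e, Finset.prod_mul_distrib,
    ← Finset.prod_subtype (Finset.univ.filter (crossing ends V1)) (by simp)
      fun e => if e ∈ B0 then 1 - p else 1,
    Finset.prod_ite_mem, Finset.inter_eq_right.2 fun e he => by simpa using hB0 e he,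
    Finset.prod_const]

theorem prod_barrierBondWeight (hB0 : ∀ e ∈ B0, crossing ends V1 e) :
    ∏ e : {e // crossing ends V1 e}, barrierBondWeight p B0 e.1 (η e.1)
      = (if ∀ e ∈ B0, η e = false then 1 else 0)
        * ∏ e ∈ Finset.univ.filter (fun e => crossing ends V1 e ∧ e ∉ B0),
            (if η e then p else 1 - p) := by
  rw [← Finset.prod_subtype (Finset.univ.filter (crossing ends V1)) (by simp)
      fun e => barrierBondWeight p B0 e (η e)]
  simp only [barrierBondWeight]
  rw [Finset.prod_ite, Finset.filter_filter, Finset.filter_filter]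
  congr 1
  have hfilter : Finset.univ.filter (fun e => crossing ends V1 e ∧ e ∈ B0) = B0 := by
    ext e
    simpa using fun he => hB0 e he
  rw [hfilter]
  split_ifs with hη
  · exact Finset.prod_eq_one fun e he => by simp [hη e he]
  · obtain ⟨e, he, hηe⟩ : ∃ e ∈ B0, η e = true := by simpa using hη
    exact Finset.prod_eq_zero he (by simp [hηe])

end Barrier

section Factorization

variable {V E : Type} [Fintype V] [DecidableEq V] [Fintype E] [DecidableEq E]
  (ends : E → V × V) (p q : ℝ) {s : ℕ} (a : Fin s → ℝ) (V1 : Finset V) (B0 : Finset E)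
  (σ : V → Fin s)

theorem ite_dacWeight_eq_mul (hq : q ≠ 0) (hB0 : ∀ e ∈ B0, crossing ends V1 e)
    (hσq : ∀ x ∈ bridgeVerts ends V1 B0, a (σ x) = 1 / q)
    (hσeq : ∀ e : E, crossing ends V1 e → e ∉ B0 → σ (ends e).1 = σ (ends e).2)
    (ξ : V → Fin s) (η : E → Bool) :
    (if (∀ e ∈ B0, η e = false) ∧ (∀ x ∈ bridgeVerts ends V1 B0, ξ x = σ x) then
        dacWeight ends p q a ξ η else 0)
      = (1 - p) ^ B0.card
        * ((if ∀ x : {v : V // v ∈ V1}, (x : V) ∈ bridgeVerts ends V1 B0 → ξ x = σ x then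
            dacWeight (restrEnds ends (· ∈ V1)) p q a (fun x => ξ x) (fun e => η e) else 0)
          * (if ∀ x : {v : V // v ∉ V1}, (x : V) ∈ bridgeVerts ends V1 B0 → ξ x = σ x then
            dacWeight (restrEnds ends (· ∉ V1)) p q a (fun x => ξ x) (fun e => η e) else 0)
          * ∏ e : {e // crossing ends V1 e}, barrierBondWeight p B0 e.1 (η e.1)) := by
  have hsides : (∀ x ∈ bridgeVerts ends V1 B0, ξ x = σ x) ↔
      (∀ x : {v : V // v ∈ V1}, (x : V) ∈ bridgeVerts ends V1 B0 → ξ x = σ x) ∧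
        ∀ x : {v : V // v ∉ V1}, (x : V) ∈ bridgeVerts ends V1 B0 → ξ x = σ x :=
    ⟨fun h => ⟨fun x => h x, fun x => h x⟩, fun ⟨h1, h2⟩ x hx =>
      if hx1 : x ∈ V1 then h1 ⟨x, hx1⟩ hx else h2 ⟨x, hx1⟩ hx⟩
  rw [ite_zero_mul_ite_zero]
  by_cases hξ : ∀ x ∈ bridgeVerts ends V1 B0, ξ x = σ x
  · rw [if_pos (hsides.1 hξ)]
    by_cases hη : ∀ e ∈ B0, η e = false
    · have hcross : ∀ e, η e = true → crossing ends V1 e →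
          ξ (ends e).1 = ξ (ends e).2 ∧ q * a (ξ (ends e).1) = 1 := by
        intro e he hcr
        have he0 : e ∉ B0 := fun h => by simp [hη e h] at he
        have h1 : (ends e).1 ∈ bridgeVerts ends V1 B0 := ⟨e, hcr, he0, .inl rfl⟩
        have h2 : (ends e).2 ∈ bridgeVerts ends V1 B0 := ⟨e, hcr, he0, .inr rfl⟩
        rw [hξ _ h1, hξ _ h2, hσq _ h1]
        exact ⟨hσeq e hcr he0, mul_one_div_cancel hq⟩
      rw [if_pos ⟨hη, hξ⟩, dacWeight_eq_mul_of_crossing ends p q a V1 hcross,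
        prod_crossing_eq_pow_mul p B0 ends V1 hB0 hη]
      ring
    · obtain ⟨e, he, hηe⟩ : ∃ e ∈ B0, η e = true := by simpa using hη
      rw [if_neg fun h => hη h.1, Finset.prod_eq_zero (Finset.mem_univ ⟨e, hB0 e he⟩)
        (by simp [barrierBondWeight, he, hηe])]
      ring
  · rw [if_neg fun h => hξ h.2, if_neg (mt hsides.2 hξ)]
    ring

end Factorization

section Probabilities

variable {V E : Type} [Fintype V] [DecidableEq V] [Fintype E] [DecidableEq E]
  (ends : E → V × V) (p q : ℝ) {s : ℕ} (a : Fin s → ℝ)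

-- The `Fintype {v // P v}` instance is a parameter so that for `P = (· ∈ V1)` it is the one
-- on `↥V1` that appears in the statement of the theorem.
noncomputable def sideWeight (P : V → Prop) [Fintype {v // P v}] [DecidablePred P] (W : Set V)
    (σ : V → Fin s) : ℝ :=
  ∑ ξ : {v // P v} → Fin s, ∑ η : {e // P (ends e).1 ∧ P (ends e).2} → Bool,
    if ∀ x : {v // P v}, (x : V) ∈ W → ξ x = σ x then dacWeight (restrEnds ends P) p q a ξ η
    else 0

theorem probK_eq_div (P : V → Prop) [Fintype {v // P v}] [DecidablePred P] (W : Set V)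
    (σ : V → Fin s) :
    probK ends p q a P W σ = sideWeight ends p q a P W σ / rcZ (restrEnds ends P) p q := by
  simp only [sideWeight, Finset.sum_div, ← ite_dacP_eq_div]
  unfold probK
  -- `probK` is elaborated with classical instances; they agree with the given ones.
  convert rfl

variable (V1 : Finset V) (B0 : Finset E) (σ : V → Fin s)

theorem probC_eq_div (hq : q ≠ 0) (hB0 : ∀ e ∈ B0, crossing ends V1 e)
    (hσq : ∀ x ∈ bridgeVerts ends V1 B0, a (σ x) = 1 / q)
    (hσeq : ∀ e : E, crossing ends V1 e → e ∉ B0 → σ (ends e).1 = σ (ends e).2) :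
    probC ends p q a V1 B0 σ
      = (1 - p) ^ B0.card * (sideWeight ends p q a (· ∈ V1) (bridgeVerts ends V1 B0) σ
        * sideWeight ends p q a (· ∉ V1) (bridgeVerts ends V1 B0) σ) / rcZ ends p q := by
  simp only [probC, ite_dacP_eq_div, ite_dacWeight_eq_mul ends p q a V1 B0 σ hq hB0 hσq hσeq,
    ← Finset.mul_sum, ← Finset.sum_div]
  congr 2
  let N1 (ξ : {v // v ∈ V1} → Fin s) (η : {e // (ends e).1 ∈ V1 ∧ (ends e).2 ∈ V1} → Bool) : ℝ :=
    if ∀ x : {v // v ∈ V1}, (x : V) ∈ bridgeVerts ends V1 B0 → ξ x = σ x then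
      dacWeight (restrEnds ends (· ∈ V1)) p q a ξ η else 0
  let N2 (ξ : {v // v ∉ V1} → Fin s) (η : {e // (ends e).1 ∉ V1 ∧ (ends e).2 ∉ V1} → Bool) : ℝ :=
    if ∀ x : {v // v ∉ V1}, (x : V) ∈ bridgeVerts ends V1 B0 → ξ x = σ x then
      dacWeight (restrEnds ends (· ∉ V1)) p q a ξ η else 0
  calc _ = ∑ ξ : V → Fin s, (∑ η1, N1 (ξ ∘ Subtype.val) η1) * (∑ η2, N2 (ξ ∘ Subtype.val) η2)
          * ∑ ηB : {e // crossing ends V1 e} → Bool, ∏ e, barrierBondWeight p B0 e.1 (ηB e) :=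
        Finset.sum_congr rfl fun ξ _ =>
          Fintype.sum_mul_mul_of_bijective_sumElim (bijective_edgeSplit ends V1)
            (N1 (ξ ∘ Subtype.val)) (N2 (ξ ∘ Subtype.val))
            fun ηB => ∏ e, barrierBondWeight p B0 e.1 (ηB e)
    _ = (∑ ξ1, ∑ η1, N1 ξ1 η1) * ∑ ξ2, ∑ η2, N2 ξ2 η2 := by
        simp only [sum_prod_barrierBondWeight, mul_one]
        exact Fintype.sum_mul_sum_of_bijective_sumElim (Equiv.sumCompl (· ∈ V1)).bijective
          (fun ξ1 => ∑ η1, N1 ξ1 η1) fun ξ2 => ∑ η2, N2 ξ2 η2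

end Probabilities

open Classical in
theorem dac_quasi_closed_barrier_factorization_general {V E : Type}
    [Fintype V] [DecidableEq V] [Fintype E] [DecidableEq E]
    (ends : E → V × V) (p q : ℝ) (hq : 0 < q)
    (s : ℕ) (a : Fin s → ℝ)
    (V1 : Finset V) (B0 : Finset E) (hB0 : ∀ e ∈ B0, crossing ends V1 e)
    (σ : V → Fin s)
    (hσq : ∀ x ∈ bridgeVerts ends V1 B0, a (σ x) = 1 / q)
    (hσeq : ∀ e : E, crossing ends V1 e → e ∉ B0 → σ (ends e).1 = σ (ends e).2)
    (hPC : 0 < probC ends p q a V1 B0 σ)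
    (hPK1 : 0 < probK ends p q a (fun v => v ∈ V1) (bridgeVerts ends V1 B0) σ)
    (hPK2 : 0 < probK ends p q a (fun v => v ∉ V1) (bridgeVerts ends V1 B0) σ)
    (ξ : V → Fin s) (η : E → Bool) :
    (if (∀ e ∈ B0, η e = false) ∧ (∀ x ∈ bridgeVerts ends V1 B0, ξ x = σ x) then
        dacP ends p q a ξ η
      else 0) / probC ends p q a V1 B0 σ
    =
    ((if ∀ x : {v : V // v ∈ V1}, (x : V) ∈ bridgeVerts ends V1 B0 → ξ (x : V) = σ (x : V) then
          dacP (restrEnds ends (fun v => v ∈ V1)) p q a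
            (fun x => ξ (x : V)) (fun e => η (e : E))
        else 0) / probK ends p q a (fun v => v ∈ V1) (bridgeVerts ends V1 B0) σ)
    * ((if ∀ x : {v : V // v ∉ V1}, (x : V) ∈ bridgeVerts ends V1 B0 → ξ (x : V) = σ (x : V) then
          dacP (restrEnds ends (fun v => v ∉ V1)) p q a
            (fun x => ξ (x : V)) (fun e => η (e : E))
        else 0) / probK ends p q a (fun v => v ∉ V1) (bridgeVerts ends V1 B0) σ)
    * (if ∀ e ∈ B0, η e = false then (1 : ℝ) else 0)
    * ∏ e ∈ Finset.univ.filter (fun e : E => crossing ends V1 e ∧ e ∉ B0),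
        (if η e then p else 1 - p) := by
  rw [probC_eq_div ends p q a V1 B0 σ hq.ne' hB0 hσq hσeq] at hPC ⊢
  rw [probK_eq_div ends p q a (· ∈ V1)] at hPK1 ⊢
  rw [probK_eq_div ends p q a (· ∉ V1)] at hPK2 ⊢
  simp only [ite_dacP_eq_div]
  obtain ⟨hS, hZ⟩ := div_ne_zero_iff.1 hPC.ne'
  rw [div_div_div_cancel_right₀ hZ, div_div_div_cancel_right₀ (div_ne_zero_iff.1 hPK1.ne').2,
    div_div_div_cancel_right₀ (div_ne_zero_iff.1 hPK2.ne').2,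
    ite_dacWeight_eq_mul ends p q a V1 B0 σ hq.ne' hB0 hσq hσeq,
    mul_div_mul_left _ _ (left_ne_zero_of_mul hS), prod_barrierBondWeight p B0 ends V1 hB0]
  ring

open Classical in
/-- quasi-closed barrier factorization (Lemma 3.4). Conditionally on
the event `C(B,σ)` (all edges of `B0 ⊆ B` closed, spins on `W_1 ∪ W_2` equal to the
`S_{1/q}`-valued `σ`, which agrees across each retained crossing edge), the DaC
configuration factorizes over the two sides: for every `(ξ,η)`,
`P^G((ξ,η) | C(B,σ)) = P^{G_1}((ξ_{V_1},η_{E_1}) | K_1) · P^{G_2}((ξ_{V_2},η_{E_2}) | K_2)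
· 1{η ≡ 0 on B0} · ∏_{e ∈ B∖B0} p^{η(e)}(1-p)^{1-η(e)}`;
in particular the two sides are conditionally independent. -/
theorem dac_quasi_closed_barrier_factorization {V E : Type}
    [Fintype V] [DecidableEq V] [Fintype E] [DecidableEq E]
    (ends : E → V × V) (p q : ℝ) (hp : p ∈ Set.Icc (0 : ℝ) 1) (hq : 0 < q)
    (s : ℕ) (hs : 2 ≤ s) (a : Fin s → ℝ) (ha : ∀ i, a i ∈ Set.Ioo (0 : ℝ) 1)
    (hsum : ∑ i : Fin s, a i = 1)
    (V1 : Finset V) (B0 : Finset E) (hB0 : ∀ e ∈ B0, crossing ends V1 e)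
    (σ : V → Fin s)
    (hσq : ∀ x ∈ bridgeVerts ends V1 B0, a (σ x) = 1 / q)
    (hσeq : ∀ e : E, crossing ends V1 e → e ∉ B0 → σ (ends e).1 = σ (ends e).2)
    (hPC : 0 < probC ends p q a V1 B0 σ)
    (hPK1 : 0 < probK ends p q a (fun v => v ∈ V1) (bridgeVerts ends V1 B0) σ)
    (hPK2 : 0 < probK ends p q a (fun v => v ∉ V1) (bridgeVerts ends V1 B0) σ)
    (ξ : V → Fin s) (η : E → Bool) :
    (if (∀ e ∈ B0, η e = false) ∧ (∀ x ∈ bridgeVerts ends V1 B0, ξ x = σ x) then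
        dacP ends p q a ξ η
      else 0) / probC ends p q a V1 B0 σ
    =
    ((if ∀ x : {v : V // v ∈ V1}, (x : V) ∈ bridgeVerts ends V1 B0 → ξ (x : V) = σ (x : V) then
          dacP (restrEnds ends (fun v => v ∈ V1)) p q a
            (fun x => ξ (x : V)) (fun e => η (e : E))
        else 0) / probK ends p q a (fun v => v ∈ V1) (bridgeVerts ends V1 B0) σ)
    * ((if ∀ x : {v : V // v ∉ V1}, (x : V) ∈ bridgeVerts ends V1 B0 → ξ (x : V) = σ (x : V) then
          dacP (restrEnds ends (fun v => v ∉ V1)) p q a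
            (fun x => ξ (x : V)) (fun e => η (e : E))
        else 0) / probK ends p q a (fun v => v ∉ V1) (bridgeVerts ends V1 B0) σ)
    * (if ∀ e ∈ B0, η e = false then (1 : ℝ) else 0)
    * ∏ e ∈ Finset.univ.filter (fun e : E => crossing ends V1 e ∧ e ∉ B0),
        (if η e then p else 1 - p) :=
  dac_quasi_closed_barrier_factorization_general ends p q hq s a V1 B0 hB0 σ hσq hσeq hPC hPK1 hPK2
    ξ η
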